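/- There exist infinitely many rational numbers c such that the map f_c(z) = z^2 + c has exactly 6 rational preperiodic points, of which exactly 2 are periodic, and both periodic points are fixed points of f_c. (This data characterizes the directed graph 6(1,1).) -/

import Mathlib

/-!
Take `p = 2k + 1` prime and `c = -AB/p²` with `A = 2(k+1)²`, `B = 2k² + 2k + 1`, `T = 2k(k+1)`.
If a rational point `x` had `|x|_q² > max(1, |c|_q)` at some prime `q`, its `q`-adic absolute
value would increase strictly along the orbit; hence `p²c ∈ ℤ` forces every preperiodic `x`
to be `a/p` with `a ∈ ℤ`. Likewise `|x| ≤ A/p`, the larger fixed point. As the image `b/p`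
obeys the same bound, `a² = AB + pb ≥ AB - pA = T²`. Writing `|a| = T + j` with
`0 ≤ j ≤ p + 1`, one has `a² - AB = j(j - 1) + p(pj - A)`, so `p ∣ j(j - 1)` and
`|a| ∈ {T, T + 1, T + p, T + p + 1}`; the value `T + p` is excluded because its image is
`(T - 1)/p`, below the bound. The remaining six points `±T/p, ±B/p, ±A/p` are preperiodic, and
only the fixed points `A/p`, `-B/p` are periodic. Finally `c ≤ -k`, so infinitely many primes
give infinitely many `c`.
-/

/-- The quadratic map `f_c(z) = z² + c`. -/
def fc (c : ℚ) : ℚ → ℚ := fun z => z ^ 2 + c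

/-- `x` is preperiodic for `f_c`: its forward orbit is eventually periodic. -/
def IsPreper (c x : ℚ) : Prop := ∃ m n : ℕ, m < n ∧ (fc c)^[m] x = (fc c)^[n] x

/-- `x` is periodic for `f_c`. -/
def IsPer (c x : ℚ) : Prop := ∃ n : ℕ, 1 ≤ n ∧ (fc c)^[n] x = x

theorem Int.eq_zero_or_one_or_eq_or_eq_add_one_of_prime_dvd_mul_sub_one {p j : ℤ} (hp : Prime p)
    (hj : p ∣ j * (j - 1)) (hj0 : 0 ≤ j) (hjp : j ≤ p + 1) :
    j = 0 ∨ j = 1 ∨ j = p ∨ j = p + 1 := by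
  have hp2 : 2 ≤ p := by
    have h1 : p ≠ 1 := fun h => hp.not_isUnit (h ▸ isUnit_one)
    have h2 : p ≠ -1 := fun h => hp.not_isUnit (h ▸ isUnit_one.neg)
    have := hp.ne_zero
    omega
  rcases hp.dvd_or_dvd hj with ⟨m, hm⟩ | ⟨m, hm⟩
  · obtain rfl | rfl : m = 0 ∨ m = 1 := by
      have : 0 ≤ m := by nlinarith
      have : m < 2 := by nlinarith
      omega
    all_goals simp_all
  · obtain rfl | rfl : m = 0 ∨ m = 1 := by
      have : 0 ≤ m := by nlinarith
      have : m < 2 := by nlinarith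
      omega
    all_goals omega

theorem Int.ncard_insert_neg_eq_six {u v w : ℤ} (hu : 0 < u) (huv : u < v) (hvw : v < w) :
    ({u, -u, v, -v, w, -w} : Set ℤ).ncard = 6 := by
  repeat rw [Set.ncard_insert_of_notMem (by simp; omega)]
  rw [Set.ncard_singleton]

theorem Rat.exists_int_eq_of_padicNorm_le_one {x : ℚ}
    (h : ∀ q : ℕ, q.Prime → padicNorm q x ≤ 1) : ∃ a : ℤ, x = a := by
  refine ⟨x.num, (Rat.coe_int_num_of_den_eq_one ?_).symm⟩
  by_contra hden
  obtain ⟨q, hq, hq_den⟩ := Nat.exists_prime_and_dvd hden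
  have := Fact.mk hq
  have hq_num : ¬ (q : ℤ) ∣ x.num := fun hq_num =>
    hq.one_lt.ne' ((Nat.Coprime.coprime_dvd_left (Int.natCast_dvd.mp hq_num)
      x.reduced).eq_one_of_dvd hq_den)
  have hnum : padicNorm q x.num = 1 := (padicNorm.int_eq_one_iff _).mpr hq_num
  have hden_lt : padicNorm q x.den < 1 := (padicNorm.nat_lt_one_iff _).mpr hq_den
  have hden_pos : 0 < padicNorm q x.den := lt_of_le_of_ne (padicNorm.nonneg _) fun h0 =>
    x.den_ne_zero (by exact_mod_cast padicNorm.zero_of_padicNorm_eq_zero h0.symm)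
  have := h q hq
  rw [← Rat.num_div_den x, padicNorm.div, hnum, div_le_iff₀ hden_pos] at this
  linarith

theorem not_isPreper_of_escape {α : Type*} [Preorder α] {c x : ℚ} (P : ℚ → Prop)
    (φ : ℚ → α) (hx : P x) (hstep : ∀ y, P y → P (fc c y) ∧ φ y < φ (fc c y)) :
    ¬ IsPreper c x := by
  have hP : ∀ n, P ((fc c)^[n] x) := fun n => by
    induction n with
    | zero => exact hx
    | succ n ih => rw [Function.iterate_succ_apply']; exact (hstep _ ih).1
  have hmono : StrictMono fun n => φ ((fc c)^[n] x) := strictMono_nat_of_lt_succ fun n => by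
    rw [Function.iterate_succ_apply']; exact (hstep _ (hP n)).2
  rintro ⟨m, n, hmn, he⟩
  exact (hmono hmn).ne (congrArg φ he)

theorem padicNorm_sq_le_of_isPreper {q : ℕ} [Fact q.Prime] {c x : ℚ} (hx : IsPreper c x) :
    padicNorm q x ^ 2 ≤ max 1 (padicNorm q c) := by
  contrapose! hx
  refine not_isPreper_of_escape (fun y => max 1 (padicNorm q c) < padicNorm q y ^ 2)
    (padicNorm q) hx fun y hy => ?_
  have hy1 : 1 < padicNorm q y := by
    have := padicNorm.nonneg (p := q) y
    nlinarith [le_max_left 1 (padicNorm q c)]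
  have hfy : padicNorm q (fc c y) = padicNorm q y ^ 2 := by
    have hsq : padicNorm q (y ^ 2) = padicNorm q y ^ 2 := by rw [sq, sq, padicNorm.mul]
    have hlt : padicNorm q c < padicNorm q (y ^ 2) := hsq ▸ (le_max_right _ _).trans_lt hy
    rw [fc, padicNorm.add_eq_max_of_ne hlt.ne', max_eq_left hlt.le, hsq]
  have hsq_lt : padicNorm q y ^ 2 < (padicNorm q y ^ 2) ^ 2 := by
    have : 1 < padicNorm q y ^ 2 := (le_max_left _ _).trans_lt hy
    nlinarith
  rw [hfy]
  exact ⟨hy.trans hsq_lt, by nlinarith⟩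

theorem exists_int_eq_mul_of_isPreper {c x : ℚ} {d m : ℤ} (hc : (d : ℚ) ^ 2 * c = m)
    (hx : IsPreper c x) : ∃ a : ℤ, d * x = a := by
  refine Rat.exists_int_eq_of_padicNorm_le_one fun q hq => ?_
  have := Fact.mk hq
  have hd : padicNorm q d ≤ 1 := padicNorm.of_int d
  have hdc : padicNorm q d ^ 2 * padicNorm q c ≤ 1 := by
    rw [sq, ← padicNorm.mul, ← padicNorm.mul, ← sq, hc]; exact padicNorm.of_int m
  have hsq : (padicNorm q (d * x)) ^ 2 ≤ 1 := calc
    padicNorm q (d * x) ^ 2 = padicNorm q d ^ 2 * padicNorm q x ^ 2 := by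
      rw [padicNorm.mul, mul_pow]
    _ ≤ padicNorm q d ^ 2 * max 1 (padicNorm q c) :=
      mul_le_mul_of_nonneg_left (padicNorm_sq_le_of_isPreper hx) (by positivity)
    _ ≤ 1 := by
      rw [mul_max_of_nonneg _ _ (by positivity), mul_one]
      exact max_le (pow_le_one₀ (padicNorm.nonneg _) hd) hdc
  exact (sq_le_one_iff₀ (padicNorm.nonneg _)).mp hsq

theorem abs_le_of_isPreper {c r x : ℚ} (hr : fc c r = r) (hr_half : 1 / 2 ≤ r)
    (hx : IsPreper c x) : |x| ≤ r := by
  contrapose! hx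
  refine not_isPreper_of_escape (fun y => r < |y|) abs hx fun y hy => ?_
  -- `f y - |y| = (|y| - r) (|y| + r - 1)` since `r² + c = r`
  have hlt : |y| < fc c y := by
    have : r ^ 2 + c = r := hr
    simp only [fc]
    nlinarith [sq_abs y]
  have := hlt.trans_le (le_abs_self _)
  exact ⟨hy.trans this, this⟩

theorem isPreper_fc_iff {c x : ℚ} : IsPreper c (fc c x) ↔ IsPreper c x := by
  constructor
  · rintro ⟨m, n, hmn, h⟩
    exact ⟨m + 1, n + 1, by omega, by simpa only [Function.iterate_succ_apply] using h⟩
  · rintro ⟨m, n, hmn, h⟩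
    refine ⟨m, n, hmn, ?_⟩
    rw [← Function.iterate_succ_apply (fc c) m x, ← Function.iterate_succ_apply (fc c) n x,
      Function.iterate_succ_apply', Function.iterate_succ_apply', h]

theorem isPreper_of_fc_eq {c x : ℚ} (hx : fc c x = x) : IsPreper c x :=
  ⟨0, 1, zero_lt_one, by simp [hx]⟩

theorem fc_neg (c x : ℚ) : fc c (-x) = fc c x := by simp only [fc, neg_sq]

theorem isPer_of_fc_eq {c x : ℚ} (hx : fc c x = x) : IsPer c x :=
  ⟨1, le_rfl, hx⟩

theorem IsPer.isPreper {c x : ℚ} (hx : IsPer c x) : IsPreper c x :=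
  let ⟨n, hn, h⟩ := hx
  ⟨0, n, hn, h.symm⟩

theorem IsPer.eq_of_iterate_eq {c x y : ℚ} {m : ℕ} (hx : IsPer c x) (hy : fc c y = y)
    (hxy : (fc c)^[m] x = y) : x = y := by
  obtain ⟨n, hn, hxn⟩ := hx
  have hper : Function.IsPeriodicPt (fc c) (n * m) x := Function.IsPeriodicPt.mul_const hxn m
  obtain ⟨l, hl⟩ : ∃ l, n * m = l + m :=
    ⟨(n - 1) * m, by rw [Nat.sub_one_mul, Nat.sub_add_cancel (Nat.le_mul_of_pos_left m hn)]⟩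
  rw [← hper.eq, hl, Function.iterate_add_apply, hxy, Function.iterate_fixed hy]

namespace Graph611

def p (k : ℕ) : ℤ := 2 * k + 1
def A (k : ℕ) : ℤ := 2 * (k + 1) ^ 2
def B (k : ℕ) : ℤ := 2 * k ^ 2 + 2 * k + 1
def T (k : ℕ) : ℤ := 2 * k * (k + 1)

/- `A / p` and `-B / p` are the fixed points of `f_c` (their sum is `(A - B) / p = 1`) and
`c` is their product; the preperiodic graph is `±T/p ↦ -A/p ↦ A/p` and `B/p ↦ -B/p`. -/
def c (k : ℕ) : ℚ := -(A k * B k : ℤ) / (p k : ℚ) ^ 2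

variable {k : ℕ}

theorem p_pos : 0 < p k := by unfold p; positivity

theorem one_le_of_prime (hp : Prime (p k)) : 1 ≤ k := by
  rcases Nat.eq_zero_or_pos k with rfl | hk
  · exact absurd hp (by simp [p])
  · exact hk

theorem fc_div_eq_div_iff {a b : ℤ} :
    fc (c k) (a / p k) = b / p k ↔ a ^ 2 - A k * B k = p k * b := by
  have hp : (p k : ℚ) ≠ 0 := by exact_mod_cast p_pos.ne'
  rw [fc, c, ← @Int.cast_inj ℚ]
  push_cast
  field_simp
  rw [sub_eq_add_neg]

theorem fc_A : fc (c k) (A k / p k) = A k / p k :=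
  fc_div_eq_div_iff.mpr (by unfold A B p; ring)

theorem fc_neg_A : fc (c k) ((-A k : ℤ) / p k) = A k / p k :=
  fc_div_eq_div_iff.mpr (by unfold A B p; ring)

theorem fc_B : fc (c k) (B k / p k) = (-B k : ℤ) / p k :=
  fc_div_eq_div_iff.mpr (by unfold A B p; ring)

theorem fc_neg_B : fc (c k) ((-B k : ℤ) / p k) = (-B k : ℤ) / p k :=
  fc_div_eq_div_iff.mpr (by unfold A B p; ring)

theorem fc_T : fc (c k) (T k / p k) = (-A k : ℤ) / p k :=
  fc_div_eq_div_iff.mpr (by unfold T A B p; ring)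

theorem fc_neg_T : fc (c k) ((-T k : ℤ) / p k) = (-A k : ℤ) / p k := by
  rw [Int.cast_neg, neg_div, fc_neg, fc_T]

theorem exists_int_eq_div_of_isPreper {x : ℚ} (hx : IsPreper (c k) x) :
    ∃ a : ℤ, x = a / p k := by
  have hp : (p k : ℚ) ≠ 0 := by exact_mod_cast p_pos.ne'
  obtain ⟨a, ha⟩ := exists_int_eq_mul_of_isPreper (d := p k) (m := -(A k * B k))
    (by rw [c]; field_simp; push_cast; ring) hx
  exact ⟨a, by rw [← ha]; field_simp⟩

theorem abs_le_A {a : ℤ} (ha : IsPreper (c k) (a / p k)) : |a| ≤ A k := by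
  have hp : (0 : ℚ) < p k := by exact_mod_cast p_pos
  have hhalf : (1 : ℚ) / 2 ≤ A k / p k := by
    rw [div_le_div_iff₀ two_pos hp]
    exact_mod_cast (show 1 * p k ≤ A k * 2 by unfold A p; nlinarith)
  have := abs_le_of_isPreper fc_A hhalf ha
  rw [abs_div, abs_of_pos hp, div_le_div_iff_of_pos_right hp] at this
  exact_mod_cast this

theorem exists_fc_num {a : ℤ} (ha : IsPreper (c k) (a / p k)) :
    ∃ b : ℤ, a ^ 2 - A k * B k = p k * b ∧ IsPreper (c k) (b / p k) := by
  obtain ⟨b, hb⟩ := exists_int_eq_div_of_isPreper (isPreper_fc_iff.mpr ha)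
  exact ⟨b, fc_div_eq_div_iff.mp hb, hb ▸ isPreper_fc_iff.mpr ha⟩

theorem T_le_abs {a : ℤ} (ha : IsPreper (c k) (a / p k)) : T k ≤ |a| := by
  obtain ⟨b, hab, hb⟩ := exists_fc_num ha
  have hT : 0 ≤ T k := by unfold T; positivity
  -- `a² = AB + pb ≥ AB - pA = T²`
  have hsq : T k ^ 2 ≤ a ^ 2 := by
    have := neg_le_of_abs_le (abs_le_A hb)
    have := p_pos (k := k)
    have hTsq : T k ^ 2 = A k * B k - p k * A k := by unfold T A B p; ring
    nlinarith
  simpa [abs_of_nonneg hT] using sq_le_sq.mp hsq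

theorem abs_eq_of_isPreper (hp : Prime (p k)) {a : ℤ} (ha : IsPreper (c k) (a / p k)) :
    |a| = T k ∨ |a| = B k ∨ |a| = A k := by
  obtain ⟨b, hab, hb⟩ := exists_fc_num ha
  set j := |a| - T k with hj
  have hdecomp : a ^ 2 - A k * B k = j * (j - 1) + p k * (p k * j - A k) := by
    rw [← sq_abs, hj]; unfold T A B p; ring
  have hdvd : p k ∣ j * (j - 1) :=
    (dvd_add_left (dvd_mul_right _ _)).mp (hdecomp ▸ Dvd.intro b hab.symm)
  have hAT : A k = T k + p k + 1 := by unfold A T p; ring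
  have hBT : B k = T k + 1 := by unfold B T; ring
  rcases Int.eq_zero_or_one_or_eq_or_eq_add_one_of_prime_dvd_mul_sub_one hp hdvd
    (by linarith [T_le_abs ha]) (by linarith [abs_le_A ha]) with h | h | h | h
  · left; omega
  · right; left; omega
  · -- `|a| = T + p` would give `b = T - 1`, below the bound `T ≤ |b|`
    exfalso
    have hb_eq : b = T k - 1 := by
      apply mul_left_cancel₀ p_pos.ne'
      rw [← hab, hdecomp, h]; unfold T A p; ring
    have := one_le_of_prime hp
    have := T_le_abs hb
    rw [hb_eq, abs_of_nonneg (by unfold T; nlinarith)] at this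
    omega
  · right; right; omega

theorem div_p_injective : Function.Injective fun a : ℤ => (a : ℚ) / p k := fun a b h => by
  simpa [div_left_inj' (show (p k : ℚ) ≠ 0 by exact_mod_cast p_pos.ne')] using h

theorem T_pos (hp : Prime (p k)) : 0 < T k := by
  have := one_le_of_prime hp; unfold T; positivity

theorem T_lt_B : T k < B k := by unfold T B; linarith

theorem B_lt_A : B k < A k := by unfold B A; nlinarith

theorem isPreper_div_iff (hp : Prime (p k)) {a : ℤ} :
    IsPreper (c k) (a / p k) ↔ a ∈ ({T k, -T k, B k, -B k, A k, -A k} : Set ℤ) := by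
  have hA : IsPreper (c k) (A k / p k) := isPreper_of_fc_eq fc_A
  have hnegA : IsPreper (c k) ((-A k : ℤ) / p k) := isPreper_fc_iff.mp (fc_neg_A ▸ hA)
  have hnegB : IsPreper (c k) ((-B k : ℤ) / p k) := isPreper_of_fc_eq fc_neg_B
  constructor
  · intro ha
    have hT := T_pos hp
    simp only [Set.mem_insert_iff, Set.mem_singleton_iff]
    rcases abs_eq_of_isPreper hp ha with h | h | h <;>
      rcases abs_eq (by linarith [T_lt_B (k := k), B_lt_A (k := k)]) |>.mp h with h' | h' <;>
      simp [h']
  · simp only [Set.mem_insert_iff, Set.mem_singleton_iff]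
    rintro (rfl | rfl | rfl | rfl | rfl | rfl)
    · exact isPreper_fc_iff.mp (fc_T ▸ hnegA)
    · exact isPreper_fc_iff.mp (fc_neg_T ▸ hnegA)
    · exact isPreper_fc_iff.mp (fc_B ▸ hnegB)
    · exact hnegB
    · exact hA
    · exact hnegA

theorem isPer_div_iff (hp : Prime (p k)) {a : ℤ} :
    IsPer (c k) (a / p k) ↔ a = A k ∨ a = -B k := by
  constructor
  · intro ha
    have hT := T_pos hp
    have hTB := T_lt_B (k := k)
    have hBA := B_lt_A (k := k)
    have hmem := (isPreper_div_iff hp).mp ha.isPreper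
    simp only [Set.mem_insert_iff, Set.mem_singleton_iff] at hmem
    rcases hmem with rfl | rfl | rfl | rfl | rfl | rfl
    · have := div_p_injective (ha.eq_of_iterate_eq (m := 2) fc_A
        (show fc (c k) (fc (c k) _) = _ by rw [fc_T, fc_neg_A]))
      omega
    · have := div_p_injective (ha.eq_of_iterate_eq (m := 2) fc_A
        (show fc (c k) (fc (c k) _) = _ by rw [fc_neg_T, fc_neg_A]))
      omega
    · have := div_p_injective (ha.eq_of_iterate_eq (m := 1) fc_neg_B fc_B)
      omega
    · exact Or.inr rfl
    · exact Or.inl rfl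
    · have := div_p_injective (ha.eq_of_iterate_eq (m := 1) fc_A fc_neg_A)
      omega
  · rintro (rfl | rfl)
    exacts [isPer_of_fc_eq fc_A, isPer_of_fc_eq fc_neg_B]

theorem setOf_eq_image {P : ℚ → Prop} (hP : ∀ x, P x → ∃ a : ℤ, x = a / p k) :
    {x | P x} = (fun a : ℤ => (a : ℚ) / p k) '' {a | P (a / p k)} := by
  ext x
  constructor
  · intro hx
    obtain ⟨a, rfl⟩ := hP x hx
    exact ⟨a, hx, rfl⟩
  · rintro ⟨a, ha, rfl⟩
    exact ha

theorem ncard_isPreper (hp : Prime (p k)) : {x | IsPreper (c k) x}.ncard = 6 := by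
  rw [setOf_eq_image fun _ => exists_int_eq_div_of_isPreper,
    Set.ncard_image_of_injective _ div_p_injective]
  simp only [isPreper_div_iff hp, Set.ofPred_mem_eq]
  exact Int.ncard_insert_neg_eq_six (T_pos hp) T_lt_B B_lt_A

theorem ncard_isPer (hp : Prime (p k)) : {x | IsPer (c k) x}.ncard = 2 := by
  rw [setOf_eq_image fun _ hx => exists_int_eq_div_of_isPreper hx.isPreper,
    Set.ncard_image_of_injective _ div_p_injective]
  simp only [isPer_div_iff hp]
  exact Set.ncard_pair (by linarith [T_pos hp, T_lt_B (k := k), B_lt_A (k := k)])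

theorem fc_eq_of_isPer (hp : Prime (p k)) {x : ℚ} (hx : IsPer (c k) x) : fc (c k) x = x := by
  obtain ⟨a, rfl⟩ := exists_int_eq_div_of_isPreper hx.isPreper
  rcases (isPer_div_iff hp).mp hx with rfl | rfl
  exacts [fc_A, fc_neg_B]

theorem c_le_neg : c k ≤ -k := by
  have hp : (0 : ℚ) < p k := by exact_mod_cast p_pos
  rw [c, neg_div, neg_le_neg_iff, le_div_iff₀ (by positivity)]
  exact_mod_cast (show (k : ℤ) * p k ^ 2 ≤ A k * B k by unfold A B p; nlinarith)

end Graph611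

/-- Graph 6(1,1): infinitely many `c ∈ ℚ` with exactly 6 rational preperiodic points,
exactly 2 of them periodic, and every periodic point fixed. -/
theorem graph_6_1_1 :
    {c : ℚ | {x : ℚ | IsPreper c x}.ncard = 6 ∧ {x : ℚ | IsPer c x}.ncard = 2 ∧
      ∀ x : ℚ, IsPer c x → fc c x = x}.Infinite := by
  refine Set.infinite_of_forall_exists_lt fun L => ?_
  obtain ⟨q, hq_ge, hq⟩ := Nat.exists_infinite_primes (2 * ⌈-L⌉₊ + 3)
  obtain ⟨k, rfl⟩ := hq.odd_of_ne_two (by omega)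
  have hp : Prime (Graph611.p k) := by simpa [Graph611.p] using Nat.prime_iff_prime_int.mp hq
  refine ⟨Graph611.c k, ⟨Graph611.ncard_isPreper hp, Graph611.ncard_isPer hp,
    fun _ => Graph611.fc_eq_of_isPer hp⟩, ?_⟩
  have hk : (⌈-L⌉₊ : ℚ) + 1 ≤ k := by exact_mod_cast (show ⌈-L⌉₊ + 1 ≤ k by omega)
  linarith [Graph611.c_le_neg (k := k), Nat.le_ceil (-L)]
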